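/- Let Q be an m×m matrix with all entries ≥ 1 (m ≥ 2), and let S₁, S₂ be m×m non-negative integer matrices each of the form Q·P·Q for non-negative integer matrices P with no zero rows or columns. Then ‖S₁‖₁ · ‖S₂‖₁ ≤ col(Qᵗ) · ‖S₁S₂‖₁, where ‖·‖₁ is the maximum column sum and col(B) = max_{i,j,k} B_{ij}/B_{kj} for strictly positive B. -/
import Mathlib


open Matrix

/-- Maximum column sum of a matrix (the `ℓ¹`-induced operator norm for non-negative matrices). -/
noncomputable def colSumNorm {m : ℕ} (S : Matrix (Fin m) (Fin m) ℝ) : ℝ :=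
  ⨆ j : Fin m, ∑ i, S i j

/-- The maximal ratio of two entries in the same column of a matrix. -/
noncomputable def colRatio {m : ℕ} (B : Matrix (Fin m) (Fin m) ℝ) : ℝ :=
  ⨆ i : Fin m, ⨆ j : Fin m, ⨆ k : Fin m, B i j / B k j

theorem colSumNorm_mul_ge {m : ℕ} (hm : 2 ≤ m)
    (Q P₁ P₂ : Matrix (Fin m) (Fin m) ℝ)
    (hQ : ∀ i j, 1 ≤ Q i j)
    (hP₁int : ∀ i j, ∃ k : ℕ, P₁ i j = (k : ℝ)) (hP₂int : ∀ i j, ∃ k : ℕ, P₂ i j = (k : ℝ))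
    (hP₁row : ∀ i, ∃ j, 0 < P₁ i j) (hP₁col : ∀ j, ∃ i, 0 < P₁ i j)
    (hP₂row : ∀ i, ∃ j, 0 < P₂ i j) (hP₂col : ∀ j, ∃ i, 0 < P₂ i j) :
    colSumNorm (Q * P₁ * Q) * colSumNorm (Q * P₂ * Q) ≤
      colRatio Qᵀ * colSumNorm ((Q * P₁ * Q) * (Q * P₂ * Q)) := by
  haveI : NeZero m := ⟨by omega⟩
  set S₁ := Q * P₁ * Q with hS₁
  set S₂ := Q * P₂ * Q with hS₂
  set R := colRatio Qᵀ with hRdef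
  have hQ0 : ∀ i j, (0:ℝ) < Q i j := fun i j => lt_of_lt_of_le one_pos (hQ i j)
  have hP₁0 : ∀ i j, (0:ℝ) ≤ P₁ i j := by
    intro i j; obtain ⟨k, hk⟩ := hP₁int i j; rw [hk]; positivity
  have hP₂0 : ∀ i j, (0:ℝ) ≤ P₂ i j := by
    intro i j; obtain ⟨k, hk⟩ := hP₂int i j; rw [hk]; positivity
  -- nonnegativity of entries of Q*P*Q
  have hSnn : ∀ (P : Matrix (Fin m) (Fin m) ℝ), (∀ i j, (0:ℝ) ≤ P i j) →
      ∀ i j, (0:ℝ) ≤ (Q * P * Q) i j := by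
    intro P hP i j
    rw [Matrix.mul_apply]
    refine Finset.sum_nonneg fun b _ => mul_nonneg ?_ (hQ0 b j).le
    rw [Matrix.mul_apply]
    exact Finset.sum_nonneg fun a _ => mul_nonneg (hQ0 i a).le (hP a b)
  have hS₂nn := hSnn P₂ hP₂0
  -- Step A : Q b j ≤ R * Q b k
  have hA : ∀ b j k, Q b j ≤ R * Q b k := by
    intro b j k
    have hd : Q b j / Q b k ≤ R := by
      have h1 : Qᵀ j b / Qᵀ k b ≤ ⨆ k' : Fin m, Qᵀ j b / Qᵀ k' b :=
        le_ciSup (f := fun k' : Fin m => Qᵀ j b / Qᵀ k' b)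
          (Set.Finite.bddAbove (Set.finite_range _)) k
      have h2 : (⨆ k' : Fin m, Qᵀ j b / Qᵀ k' b) ≤
          ⨆ j' : Fin m, ⨆ k' : Fin m, Qᵀ j j' / Qᵀ k' j' :=
        le_ciSup (f := fun j' : Fin m => ⨆ k' : Fin m, Qᵀ j j' / Qᵀ k' j')
          (Set.Finite.bddAbove (Set.finite_range _)) b
      have h3 : (⨆ j' : Fin m, ⨆ k' : Fin m, Qᵀ j j' / Qᵀ k' j') ≤ R :=
        le_ciSup (f := fun i : Fin m => ⨆ j' : Fin m, ⨆ k' : Fin m, Qᵀ i j' / Qᵀ k' j')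
          (Set.Finite.bddAbove (Set.finite_range _)) j
      have : Qᵀ j b / Qᵀ k b ≤ R := h1.trans (h2.trans h3)
      simpa [Matrix.transpose_apply] using this
    calc Q b j = (Q b j / Q b k) * Q b k :=
          (div_mul_cancel₀ _ (hQ0 b k).ne').symm
      _ ≤ R * Q b k := mul_le_mul_of_nonneg_right hd (hQ0 b k).le
  have hR0 : (0:ℝ) ≤ R := by
    have := hA 0 0 0
    nlinarith [hQ0 0 0, hQ 0 0]
  -- column sum decomposition : ∑ i, (Q*P*Q) i j = ∑ b, (∑ i, (Q*P) i b) * Q b j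
  have hcol : ∀ (P : Matrix (Fin m) (Fin m) ℝ) (j : Fin m),
      (∑ i, (Q * P * Q) i j) = ∑ b, (∑ i, (Q * P) i b) * Q b j := by
    intro P j
    simp_rw [Matrix.mul_apply (M := Q * P) (N := Q), Finset.sum_mul]
    rw [Finset.sum_comm]
  -- key ratio bound on column sums of S₁
  have hratio : ∀ j k, (∑ i, S₁ i j) ≤ R * ∑ i, S₁ i k := by
    intro j k
    rw [hS₁, hcol, hcol, Finset.mul_sum]
    refine Finset.sum_le_sum fun b _ => ?_
    have hub : (0:ℝ) ≤ ∑ i, (Q * P₁) i b := by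
      refine Finset.sum_nonneg fun i _ => ?_
      rw [Matrix.mul_apply]
      exact Finset.sum_nonneg fun a _ => mul_nonneg (hQ0 i a).le (hP₁0 a b)
    calc (∑ i, (Q * P₁) i b) * Q b j ≤ (∑ i, (Q * P₁) i b) * (R * Q b k) :=
          mul_le_mul_of_nonneg_left (hA b j k) hub
      _ = R * ((∑ i, (Q * P₁) i b) * Q b k) := by ring
  -- pick maximizing columns
  obtain ⟨j₁, hj₁⟩ : ∃ j : Fin m, (∑ i, S₁ i j) = ⨆ j : Fin m, ∑ i, S₁ i j :=
    exists_eq_ciSup_of_finite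
  obtain ⟨j₂, hj₂⟩ : ∃ j : Fin m, (∑ i, S₂ i j) = ⨆ j : Fin m, ∑ i, S₂ i j :=
    exists_eq_ciSup_of_finite
  have hprodcol : (∑ i, (S₁ * S₂) i j₂) = ∑ k, (∑ i, S₁ i k) * S₂ k j₂ := by
    simp_rw [Matrix.mul_apply, Finset.sum_mul]
    rw [Finset.sum_comm]
  have key : (∑ i, S₁ i j₁) * (∑ k, S₂ k j₂) ≤ R * ∑ i, (S₁ * S₂) i j₂ := by
    rw [hprodcol, Finset.mul_sum, Finset.mul_sum]
    refine Finset.sum_le_sum fun k _ => ?_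
    calc (∑ i, S₁ i j₁) * S₂ k j₂ ≤ (R * ∑ i, S₁ i k) * S₂ k j₂ :=
          mul_le_mul_of_nonneg_right (hratio j₁ k) (hS₂nn k j₂)
      _ = R * ((∑ i, S₁ i k) * S₂ k j₂) := by ring
  have hle : (∑ i, (S₁ * S₂) i j₂) ≤ colSumNorm (S₁ * S₂) := by
    rw [colSumNorm]
    exact le_ciSup (f := fun j : Fin m => ∑ i, (S₁ * S₂) i j)
      (Set.Finite.bddAbove (Set.finite_range _)) j₂
  calc colSumNorm S₁ * colSumNorm S₂ = (∑ i, S₁ i j₁) * (∑ k, S₂ k j₂) := by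
        rw [colSumNorm, colSumNorm, hj₁, hj₂]
    _ ≤ R * ∑ i, (S₁ * S₂) i j₂ := key
    _ ≤ R * colSumNorm (S₁ * S₂) := mul_le_mul_of_nonneg_left hle hR0
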